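/- arXiv:1409.0170 — 7 statements merged into one kernel-verified Lean document; each statement's English description precedes it below -/
import Mathlib

section
/- In a finite commutative monoid M, the product e of all idempotents of M is itself idempotent, and e is accessible from every element: for all m ∈ M, e ∈ Mm. -/
lemma aux_pow_stable {M : Type*} [CommMonoid M] (m : M) (a d : ℕ) (h : m ^ a = m ^ (a + d)) :
    ∀ k x, a ≤ x → m ^ (x + k * d) = m ^ x := by
  have step : ∀ x, a ≤ x → m ^ (x + d) = m ^ x := by
    intro x hx
    have : m ^ x = m ^ a * m ^ (x - a) := by rw [← pow_add, Nat.add_sub_cancel' hx]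
    rw [this, h, ← pow_add]
    congr 1
    omega
  intro k
  induction k with
  | zero => simp
  | succ k ih =>
    intro x hx
    have : x + (k + 1) * d = (x + k * d) + d := by ring
    rw [this, step _ (by omega), ih x hx]

lemma aux_idem_pow {M : Type*} [CommMonoid M] [Fintype M] (m : M) :
    ∃ n, 1 ≤ n ∧ m ^ n * m ^ n = m ^ n := by
  obtain ⟨i, j, hij, he⟩ := Fintype.exists_ne_map_eq_of_card_lt
    (fun n : Fin (Fintype.card M + 1) => m ^ ((n : ℕ) + 1)) (by simp)
  wlog hlt : (i : ℕ) < (j : ℕ) generalizing i j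
  · exact this j i hij.symm he.symm (by omega)
  set a := (i : ℕ) + 1
  set d := (j : ℕ) - (i : ℕ)
  have hd : 1 ≤ d := by omega
  have ha : m ^ a = m ^ (a + d) := by
    rw [he]; congr 1; omega
  refine ⟨a * d, Nat.mul_pos (by omega) hd, ?_⟩
  rw [← pow_add]
  exact aux_pow_stable m a d ha a (a * d) (Nat.le_mul_of_pos_right a hd)

theorem stmt1 {M : Type*} [CommMonoid M] [Fintype M] [DecidableEq M] :
    (∏ f ∈ Finset.univ.filter (fun f : M => f * f = f), f) *
      (∏ f ∈ Finset.univ.filter (fun f : M => f * f = f), f) =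
      (∏ f ∈ Finset.univ.filter (fun f : M => f * f = f), f) ∧
    ∀ m : M, ∃ x : M,
      x * m = ∏ f ∈ Finset.univ.filter (fun f : M => f * f = f), f := by
  constructor
  · rw [← Finset.prod_mul_distrib]
    apply Finset.prod_congr rfl
    intro f hf
    exact (Finset.mem_filter.mp hf).2
  · intro m
    obtain ⟨n, hn, hid⟩ := aux_idem_pow m
    have hmem : m ^ n ∈ Finset.univ.filter (fun f : M => f * f = f) := by
      simp [hid]
    refine ⟨m ^ (n - 1) * ∏ f ∈ (Finset.univ.filter (fun f : M => f * f = f)).erase (m ^ n), f, ?_⟩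
    have hmn : m * m ^ (n - 1) = m ^ n := by
      have h := (pow_add m 1 (n - 1)).symm
      rw [pow_one] at h
      rw [h]
      congr 1
      omega
    rw [mul_comm, ← mul_assoc]
    rw [hmn]
    exact Finset.mul_prod_erase _ (fun x => x) hmem
end

section
/- Let M be a finite commutative monoid with minimal idempotent e acting on a set X such that the action is irreducible (i.e., for all x, x' ∈ X there exist m, m' ∈ M with mx = m'x'). Then for x ∈ X, the following are equivalent: (1) x ∈ My for all y ∈ X; (2) x ∈ M(mx) for all m ∈ M; (3) x ∈ mX for all m ∈ M; (4) x ∈ eX; (5) x = ex. -/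
theorem stmt3 {M X : Type*} [CommMonoid M] [Finite M] [MulAction M X]
    (hirr : ∀ x x' : X, ∃ m m' : M, m • x = m' • x')
    (e : M) (hidem : e * e = e) (hacc : ∀ m : M, ∃ x : M, x * m = e) (x : X) :
    [(∀ y : X, ∃ m : M, m • y = x),
     (∀ m : M, ∃ m' : M, m' • (m • x) = x),
     (∀ m : M, ∃ z : X, m • z = x),
     (∃ z : X, e • z = x),
     (e • x = x)].TFAE := by
  tfae_have 1 → 2 := fun h m => h (m • x)
  tfae_have 2 → 3 := by
    intro h m
    obtain ⟨m', hm'⟩ := h m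
    exact ⟨m' • x, by rw [smul_smul, mul_comm, ← smul_smul]; exact hm'⟩
  tfae_have 3 → 4 := fun h => h e
  tfae_have 4 → 5 := by
    rintro ⟨z, rfl⟩
    rw [smul_smul, hidem]
  tfae_have 5 → 1 := by
    intro h y
    obtain ⟨m, m', hm⟩ := hirr x y
    obtain ⟨n, hn⟩ := hacc m
    refine ⟨n * m', ?_⟩
    rw [← smul_smul, ← hm, smul_smul, hn, h]
  tfae_finish
end

section
/- Let M be a finite commutative monoid with minimal idempotent e acting irreducibly on a set X. Then every m ∈ M acts invertibly on eX, i.e., the map y ↦ my is a bijection from eX to eX. -/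
theorem stmt4 {M X : Type*} [CommMonoid M] [Finite M] [MulAction M X]
    (hirr : ∀ x x' : X, ∃ m m' : M, m • x = m' • x')
    (e : M) (hidem : e * e = e) (hacc : ∀ m : M, ∃ x : M, x * m = e) (m : M) :
    Set.BijOn (fun y : X => m • y) (Set.range fun x : X => e • x)
      (Set.range fun x : X => e • x) := by
  obtain ⟨k, hk⟩ := hacc m
  have hfix : ∀ x : X, k • m • e • x = e • x := by
    intro x
    rw [← mul_smul, ← mul_smul, hk, hidem]
  refine ⟨?_, ?_, ?_⟩
  · rintro y ⟨x, rfl⟩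
    exact ⟨m • x, by simp [← mul_smul, mul_comm]⟩
  · rintro y ⟨x, rfl⟩ y' ⟨x', rfl⟩ h
    simp only at h
    have := congrArg (fun z => k • z) h
    simpa only [hfix] using this
  · rintro y ⟨x, rfl⟩
    refine ⟨k • e • x, ⟨k • x, by rw [smul_comm]⟩, ?_⟩
    simp only []
    rw [smul_comm m k, hfix]
end

section
/- Let M be a finite commutative monoid with minimal idempotent e acting on a finite set X, and let M' be a submonoid of M generated by a set S, with minimal idempotent e'. A state x ∈ X satisfies the Markov recurrence condition (x is accessible from mx for all m ∈ M') if and only if e'x = x. -/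
theorem stmt7 {M X : Type*} [CommMonoid M] [Finite M] [MulAction M X] [Finite X]
    (M' : Submonoid M) (S : Set M) (hS : Submonoid.closure S = M')
    (e' : M) (he'mem : e' ∈ M') (hidem : e' * e' = e')
    (hacc : ∀ m ∈ M', ∃ x ∈ M', x * m = e') (x : X) :
    (∀ m ∈ M', ∃ m'' ∈ M', m'' • (m • x) = x) ↔ e' • x = x := by
  constructor
  · intro h
    obtain ⟨m'', _, hm⟩ := h e' he'mem
    calc e' • x = e' • (m'' • (e' • x)) := by rw [hm]
    _ = (m'' * (e' * e')) • x := by rw [smul_smul, smul_smul, mul_comm e' m'', mul_assoc]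
    _ = m'' • (e' • x) := by rw [hidem, smul_smul]
    _ = x := hm
  · intro h m hm
    obtain ⟨m'', hmem, hm'⟩ := hacc m hm
    exact ⟨m'', hmem, by rw [smul_smul, hm', h]⟩
end

section
/- Let L = (I − P)D where P is a nonnegative square rational matrix with spectral radius < 1 and D is diagonal with positive integer entries r_a. Suppose L𝟙 may have negative entries. Then there exists a pointwise smallest integer vector y ≥ 𝟙 such that Ly ≥ 0: the set { y ∈ ℤ^A : y ≥ 𝟙, Ly ≥ 0 } is nonempty and closed under coordinatewise minimum. -/
/-!
By Gelfand's formula some power `P ^ k` has all row sums below `1`, so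
`x = ∑_{m < k} P ^ m 𝟙 ≥ 𝟙` satisfies `(I - P) x = 𝟙 - P ^ k 𝟙 > 0`. Rounding `D⁻¹ (M x)` up
for `M` large enough that `M (I - P) x` absorbs the rounding error `P r` gives a feasible
integer vector. Since `L` has nonpositive off-diagonal entries, the feasible set is closed under
coordinatewise minimum; it is bounded below by `𝟙`, hence has a minimal element in the locally
finite order `ℤⁿ`, and closure under minimum makes that element the least one.
-/

open Matrix

/-- The Laplacian `L = (I - P) D`. -/
noncomputable def Lmat {n : ℕ} (P : Matrix (Fin n) (Fin n) ℚ) (r : Fin n → ℤ) :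
    Matrix (Fin n) (Fin n) ℚ :=
  (1 - P) * Matrix.diagonal fun i => (r i : ℚ)

/-- The feasible set `{ y ∈ ℤ^n : y ≥ 1, L y ≥ 0 }`. -/
noncomputable def Feasible {n : ℕ} (P : Matrix (Fin n) (Fin n) ℚ) (r : Fin n → ℤ)
    (y : Fin n → ℤ) : Prop :=
  (∀ i, 1 ≤ y i) ∧ ∀ i, 0 ≤ (Lmat P r *ᵥ fun j => (y j : ℚ)) i

open Filter Finset NNReal

theorem exists_isLeast_of_inf_mem {α : Type*} [SemilatticeInf α] [LocallyFiniteOrder α]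
    {s : Set α} (hne : s.Nonempty) (hbdd : BddBelow s) (hinf : ∀ a ∈ s, ∀ b ∈ s, a ⊓ b ∈ s) :
    ∃ a, IsLeast s a := by
  obtain ⟨a, ha⟩ := hbdd.wellFoundedOn_lt.exists_minimal hne
  exact ⟨a, ha.prop, fun b hb => (ha.le_of_le (hinf a ha.prop b hb) inf_le_left).trans inf_le_right⟩

theorem eventually_nnnorm_pow_lt_one {A : Type*} [NormedRing A] [NormedAlgebra ℂ A]
    [CompleteSpace A] {a : A} (ha : spectralRadius ℂ a < 1) : ∀ᶠ k in atTop, ‖a ^ k‖₊ < 1 := by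
  filter_upwards [(spectrum.pow_nnnorm_pow_one_div_tendsto_nhds_spectralRadius a).eventually_lt_const
    ha, eventually_gt_atTop 0] with k hk hk0
  rw [one_div, ENNReal.rpow_inv_lt_iff (by positivity), ENNReal.one_rpow] at hk
  exact_mod_cast hk

namespace Matrix

variable {ι : Type*} [Fintype ι]

theorem spectralRadius_lt_one [DecidableEq ι] (Q : Matrix ι ι ℂ)
    (h : ∀ μ ∈ Q.charpoly.roots, ‖μ‖ < 1) : spectralRadius ℂ Q < 1 := by
  set c : ℝ≥0 := Q.charpoly.roots.toFinset.sup (‖·‖₊)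
  have hc : c < 1 := (Finset.sup_lt_iff zero_lt_one).2 fun μ hμ => by
    simpa [← NNReal.coe_lt_coe] using h μ (Multiset.mem_toFinset.1 hμ)
  refine lt_of_le_of_lt (iSup₂_le fun μ hμ => ?_) (ENNReal.coe_lt_one_iff.2 hc)
  have hroot : μ ∈ Q.charpoly.roots :=
    (Polynomial.mem_roots (charpoly_monic Q).ne_zero).2 (mem_spectrum_iff_isRoot_charpoly.1 hμ)
  simpa [enorm_eq_nnnorm] using Finset.le_sup (f := (‖·‖₊)) (Multiset.mem_toFinset.2 hroot)

theorem monotone_mulVec {R : Type*} [Semiring R] [PartialOrder R] [IsOrderedRing R]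
    {P : Matrix ι ι R} (hP : ∀ i j, 0 ≤ P i j) : Monotone (P *ᵥ ·) :=
  fun _ _ h i => sum_le_sum fun j _ => mul_le_mul_of_nonneg_left (h j) (hP i j)

theorem mulVec_inf_nonneg {R : Type*} [Ring R] [LinearOrder R] [IsOrderedRing R]
    {A : Matrix ι ι R} (hA : ∀ i j, i ≠ j → A i j ≤ 0) {v w : ι → R}
    (hv : 0 ≤ A *ᵥ v) (hw : 0 ≤ A *ᵥ w) : 0 ≤ A *ᵥ (v ⊓ w) := by
  suffices key : ∀ a b : ι → R, 0 ≤ A *ᵥ a → ∀ i, a i ≤ b i → 0 ≤ (A *ᵥ (a ⊓ b)) i by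
    intro i
    rcases le_total (v i) (w i) with h | h
    · exact key v w hv i h
    · rw [inf_comm]; exact key w v hw i h
  intro a b ha i h
  refine (ha i).trans (sum_le_sum fun j _ => ?_)
  rcases eq_or_ne i j with rfl | hij
  · simp [h]
  · exact mul_le_mul_of_nonpos_left inf_le_left (hA i j hij)

open scoped Norms.Operator in
theorem exists_pow_rowSum_lt_one [DecidableEq ι] {P : Matrix ι ι ℚ} (hP : ∀ i j, 0 ≤ P i j)
    (hspec : ∀ μ ∈ (P.map ((↑) : ℚ → ℂ)).charpoly.roots, ‖μ‖ < 1) :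
    ∃ k, 0 < k ∧ ∀ i, ∑ j, (P ^ k) i j < 1 := by
  obtain ⟨k, hk, hk0⟩ :=
    ((eventually_nnnorm_pow_lt_one (spectralRadius_lt_one (P.map ((↑) : ℚ → ℂ)) hspec)).and
      (eventually_gt_atTop 0)).exists
  refine ⟨k, hk0, fun i => ?_⟩
  have hrow : ∑ j, ‖(P.map ((↑) : ℚ → ℂ) ^ k) i j‖₊ < 1 :=
    (linfty_opNNNorm_def (P.map ((↑) : ℚ → ℂ) ^ k) ▸
      Finset.le_sup (f := fun i => ∑ j, ‖(P.map ((↑) : ℚ → ℂ) ^ k) i j‖₊) (mem_univ i)).trans_lt hk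
  have hmap : P.map ((↑) : ℚ → ℂ) ^ k = (P ^ k).map (↑) :=
    (map_pow (Rat.castHom ℂ).mapMatrix P k).symm
  have hentry : ∀ j, ‖(P.map ((↑) : ℚ → ℂ) ^ k) i j‖ = (P ^ k) i j := fun j => by
    simpa [hmap] using pow_apply_nonneg hP k i j
  rw [← NNReal.coe_lt_coe] at hrow
  push_cast [coe_nnnorm, hentry] at hrow
  exact_mod_cast hrow

theorem exists_one_le_sub_mulVec_pos [DecidableEq ι] {R : Type*} [CommRing R] [PartialOrder R]
    [IsOrderedRing R] {P : Matrix ι ι R} (hP : ∀ i j, 0 ≤ P i j) {k : ℕ} (hk : 0 < k)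
    (hrow : ∀ i, ∑ j, (P ^ k) i j < 1) :
    ∃ x : ι → R, (∀ i, 1 ≤ x i) ∧ ∀ i, 0 < ((1 - P) *ᵥ x) i := by
  refine ⟨(∑ m ∈ range k, P ^ m) *ᵥ 1, fun i => ?_, fun i => ?_⟩
  · rw [sum_mulVec, Finset.sum_apply]
    calc 1 = (P ^ 0 *ᵥ 1) i := by simp
      _ ≤ _ := single_le_sum (fun m _ => sum_nonneg fun j _ =>
          mul_nonneg (pow_apply_nonneg hP m i j) zero_le_one) (mem_range.2 hk)
  · rw [mulVec_mulVec, mul_neg_geom_sum, sub_mulVec, one_mulVec]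
    simpa [mulVec, dotProduct] using hrow i

end Matrix

theorem Lmat_mulVec {n : ℕ} (P : Matrix (Fin n) (Fin n) ℚ) (r : Fin n → ℤ) (v : Fin n → ℚ) :
    Lmat P r *ᵥ v = (1 - P) *ᵥ fun j => (r j : ℚ) * v j := by
  rw [Lmat, ← mulVec_mulVec]
  congr 1
  ext j
  exact mulVec_diagonal _ _ j

theorem Lmat_apply_nonpos {n : ℕ} {P : Matrix (Fin n) (Fin n) ℚ} (hP : ∀ i j, 0 ≤ P i j)
    {r : Fin n → ℤ} (hr : ∀ i, 0 ≤ r i) {i j : Fin n} (hij : i ≠ j) : Lmat P r i j ≤ 0 := by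
  have : 0 ≤ P i j * r j := mul_nonneg (hP i j) (by exact_mod_cast hr j)
  simpa [Lmat, mul_diagonal, Matrix.sub_apply, one_apply_ne hij] using this

theorem Feasible.inf {n : ℕ} {P : Matrix (Fin n) (Fin n) ℚ} (hP : ∀ i j, 0 ≤ P i j)
    {r : Fin n → ℤ} (hr : ∀ i, 0 ≤ r i) {y y' : Fin n → ℤ} (hy : Feasible P r y)
    (hy' : Feasible P r y') : Feasible P r (y ⊓ y') := by
  refine ⟨fun i => le_inf (hy.1 i) (hy'.1 i), ?_⟩
  have hcast : (fun j => ((y ⊓ y') j : ℚ)) = (fun j => (y j : ℚ)) ⊓ fun j => (y' j : ℚ) :=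
    funext fun j => Int.cast_min
  rw [hcast]
  exact mulVec_inf_nonneg (fun i j => Lmat_apply_nonpos hP hr) hy.2 hy'.2

theorem exists_feasible_of_sub_mulVec_pos {n : ℕ} {P : Matrix (Fin n) (Fin n) ℚ}
    (hP : ∀ i j, 0 ≤ P i j) {r : Fin n → ℤ} (hr : ∀ i, 0 < r i) {x : Fin n → ℚ}
    (hx : ∀ i, 0 < x i) (hPx : ∀ i, 0 < ((1 - P) *ᵥ x) i) : ∃ y, Feasible P r y := by
  obtain ⟨M, hM, hM0⟩ : ∃ M : ℚ,
      (∀ i, (P *ᵥ fun j => (r j : ℚ)) i ≤ M * ((1 - P) *ᵥ x) i) ∧ 0 < M :=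
    ((eventually_all.2 fun i =>
      (tendsto_id.atTop_mul_const (hPx i)).eventually_ge_atTop _).and
      (eventually_gt_atTop 0)).exists
  have hr' : ∀ i, (0 : ℚ) < r i := fun i => by exact_mod_cast hr i
  refine ⟨fun i => ⌈M * x i / r i⌉, fun i => ?_, fun i => ?_⟩
  · exact Int.one_le_ceil_iff.2 (div_pos (mul_pos hM0 (hx i)) (hr' i))
  set z : Fin n → ℚ := fun j => (r j : ℚ) * ⌈M * x j / r j⌉
  have hlo : M • x ≤ z := fun j => (div_le_iff₀' (hr' j)).1 (Int.le_ceil _)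
  have hhi : z ≤ M • x + fun j => (r j : ℚ) := fun j => by
    calc z j ≤ r j * (M * x j / r j + 1) :=
          mul_le_mul_of_nonneg_left (Int.ceil_lt_add_one _).le (hr' j).le
      _ = M * x j + r j := by field_simp [(hr' j).ne']
  rw [Lmat_mulVec]
  calc 0 ≤ M * ((1 - P) *ᵥ x) i - (P *ᵥ fun j => (r j : ℚ)) i := sub_nonneg.2 (hM i)
    _ = (M • x) i - (P *ᵥ (M • x + fun j => (r j : ℚ))) i := by
      simp only [sub_mulVec, one_mulVec, mulVec_add, mulVec_smul, Pi.sub_apply, Pi.add_apply,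
        Pi.smul_apply, smul_eq_mul]
      ring
    _ ≤ z i - (P *ᵥ z) i := sub_le_sub (hlo i) (monotone_mulVec hP hhi i)
    _ = ((1 - P) *ᵥ z) i := by simp [sub_mulVec]

theorem stmt16 {n : ℕ} (P : Matrix (Fin n) (Fin n) ℚ) (hnn : ∀ i j, 0 ≤ P i j)
    (hspec : ∀ μ ∈ (P.map ((↑) : ℚ → ℂ)).charpoly.roots, ‖μ‖ < 1)
    (r : Fin n → ℤ) (hr : ∀ i, 0 < r i) :
    (∃ y : Fin n → ℤ, Feasible P r y) ∧
    (∀ y y' : Fin n → ℤ, Feasible P r y → Feasible P r y' →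
        Feasible P r (fun i => min (y i) (y' i))) ∧
    (∃ y₀ : Fin n → ℤ, Feasible P r y₀ ∧
        ∀ y : Fin n → ℤ, Feasible P r y → ∀ i, y₀ i ≤ y i) := by
  obtain ⟨k, hk, hrow⟩ := exists_pow_rowSum_lt_one hnn hspec
  obtain ⟨x, hx1, hx⟩ := exists_one_le_sub_mulVec_pos hnn hk hrow
  have hne : ∃ y, Feasible P r y :=
    exists_feasible_of_sub_mulVec_pos hnn hr (fun i => one_pos.trans_le (hx1 i)) hx
  have hinf : ∀ y y', Feasible P r y → Feasible P r y' → Feasible P r (y ⊓ y') :=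
    fun _ _ => Feasible.inf hnn fun i => (hr i).le
  obtain ⟨y₀, hy₀, hleast⟩ :=
    exists_isLeast_of_inf_mem (s := {y | Feasible P r y}) hne ⟨1, fun y hy => hy.1⟩
      fun y hy y' hy' => hinf y y' hy hy'
  exact ⟨hne, hinf, y₀, hy₀, fun y hy => hleast hy⟩
end

section
/- Let L be a real square matrix with nonpositive off-diagonal entries. If y and y' are integer vectors with Ly ≥ 0 and Ly' ≥ 0, then L(min(y,y')) ≥ 0, where min is taken coordinatewise. -/
open Matrix

lemma stmt17_aux {n : ℕ} (L : Matrix (Fin n) (Fin n) ℝ)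
    (hoff : ∀ i j, i ≠ j → L i j ≤ 0)
    (y y' : Fin n → ℤ)
    (i : Fin n)
    (hy : 0 ≤ (L *ᵥ fun j => (y j : ℝ)) i)
    (h : y i ≤ y' i) :
    0 ≤ (L *ᵥ fun j => ((min (y j) (y' j) : ℤ) : ℝ)) i := by
  have key : (L *ᵥ fun j => ((min (y j) (y' j) : ℤ) : ℝ)) i
      = (L *ᵥ fun j => (y j : ℝ)) i
        + ∑ j, L i j * (((min (y j) (y' j) : ℤ) : ℝ) - (y j : ℝ)) := by
    simp only [mulVec, dotProduct, ← Finset.sum_add_distrib]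
    congr 1; ext j; ring
  rw [key]
  have hsum : 0 ≤ ∑ j, L i j * (((min (y j) (y' j) : ℤ) : ℝ) - (y j : ℝ)) := by
    apply Finset.sum_nonneg
    intro j _
    by_cases hij : i = j
    · subst hij
      simp [min_eq_left h]
    · have h1 : L i j ≤ 0 := hoff i j (Ne.symm (fun h => hij h.symm))
      have h2 : ((min (y j) (y' j) : ℤ) : ℝ) - (y j : ℝ) ≤ 0 := by
        have : min (y j) (y' j) ≤ y j := min_le_left _ _
        have : ((min (y j) (y' j) : ℤ) : ℝ) ≤ (y j : ℝ) := Int.cast_le.2 this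
        linarith
      nlinarith [mul_nonneg (neg_nonneg.2 h1) (neg_nonneg.2 h2)]
  linarith

theorem stmt17 {n : ℕ} (L : Matrix (Fin n) (Fin n) ℝ)
    (hoff : ∀ i j, i ≠ j → L i j ≤ 0)
    (y y' : Fin n → ℤ)
    (hy : ∀ i, 0 ≤ (L *ᵥ fun j => (y j : ℝ)) i)
    (hy' : ∀ i, 0 ≤ (L *ᵥ fun j => (y' j : ℝ)) i) :
    ∀ i, 0 ≤ (L *ᵥ fun j => ((min (y j) (y' j) : ℤ) : ℝ)) i := by
  intro i
  rcases le_total (y i) (y' i) with h | h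
  · exact stmt17_aux L hoff y y' i (hy i) h
  · have := stmt17_aux L hoff y' y i (hy' i) h
    simpa [min_comm] using this
end

section
/- Let M be a finite commutative monoid acting irreducibly and faithfully on a finite set Q, with minimal idempotent e. If M' is a submonoid of M such that e'M' = eM (where e' is the minimal idempotent of M'), then e' = e, and any two elements of eQ are mutually accessible under M': for q, q' ∈ eQ there exists m ∈ M' with mq = q'. -/
theorem stmt18 {M Q : Type*} [CommMonoid M] [Finite M] [MulAction M Q] [Finite Q]
    (hirr : ∀ q q' : Q, ∃ m m' : M, m • q = m' • q')
    (hfaith : ∀ m m' : M, (∀ q : Q, m • q = m' • q) → m = m')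
    (e : M) (hidem : e * e = e) (hacc : ∀ m : M, ∃ x : M, x * m = e)
    (M' : Submonoid M) (e' : M) (he'mem : e' ∈ M') (hidem' : e' * e' = e')
    (hacc' : ∀ m ∈ M', ∃ x ∈ M', x * m = e')
    (heq : {g : M | ∃ m ∈ M', e' * m = g} = {g : M | ∃ m : M, e * m = g}) :
    e' = e ∧ ∀ q q' : Q, e • q = q → e • q' = q' → ∃ m ∈ M', m • q = q' := by
  have h1 : e' ∈ {g : M | ∃ m : M, e * m = g} := by
    rw [← heq]; exact ⟨1, M'.one_mem, mul_one e'⟩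
  have h2 : e ∈ {g : M | ∃ m ∈ M', e' * m = g} := by
    rw [heq]; exact ⟨1, mul_one e⟩
  obtain ⟨a, ha⟩ := h1
  obtain ⟨b, hb, hb'⟩ := h2
  have hee' : e * e' = e' := by
    rw [← ha, ← mul_assoc, hidem, ha]
  have he'e : e' * e = e := by
    rw [← hb', ← mul_assoc, hidem', hb']
  have hmain : e' = e := by rw [← hee', mul_comm, he'e]
  refine ⟨hmain, fun q q' hq hq' => ?_⟩
  obtain ⟨m, m', hmm⟩ := hirr q q'
  obtain ⟨x, hx⟩ := hacc m'
  have hn : (x * m) • q = q' := by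
    rw [mul_smul, hmm, ← mul_smul, hx, hq']
  have h3 : e * (x * m) ∈ {g : M | ∃ m ∈ M', e' * m = g} := by
    rw [heq]; exact ⟨x * m, rfl⟩
  obtain ⟨m₀, hm₀, hm₀'⟩ := h3
  refine ⟨e' * m₀, M'.mul_mem he'mem hm₀, ?_⟩
  rw [hm₀', mul_smul, hn, hq']
end
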